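/- Let μ and ν be ergodic f-invariant Borel probability measures on I, both absolutely continuous with respect to m. Assume: (i) μ is equivalent to m on Δ*, i.e. for every Borel set A ⊆ Δ* one has μ(A) = 0 if and only if m(A) = 0; and (ii) for m-almost every x ∈ I there exist an open set V ⊆ ℝ containing x and an integer N ≥ 0 such that f^N(V ∩ I) ⊆ Δ*. Then μ = ν. -/

import Mathlib

open MeasureTheory Set Function
open scoped ENNReal

noncomputable section

/-- Lebesgue measure restricted to `I = [a,b]`. -/
def mI (a b : ℝ) : Measure ℝ := volume.restrict (Icc a b)

/-- `μ` is `f`-invariant (for `f : I → I`): `μ(f⁻¹(A)) = μ(A)` for every Borel `A ⊆ I`. -/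
def InvariantOn (f : ℝ → ℝ) (a b : ℝ) (μ : Measure ℝ) : Prop :=
  ∀ A : Set ℝ, A ⊆ Icc a b → MeasurableSet A → μ (f ⁻¹' A ∩ Icc a b) = μ A

/-- `μ` is ergodic for `f : I → I`: invariant Borel sets have measure `0` or `1`. -/
def ErgodicInv (f : ℝ → ℝ) (a b : ℝ) (μ : Measure ℝ) : Prop :=
  ∀ A : Set ℝ, A ⊆ Icc a b → MeasurableSet A → f ⁻¹' A ∩ Icc a b = A →
    μ A = 0 ∨ μ A = 1

/-- If `w < 1` on `s` and `μ s ≤ ∫_s w`, then `μ s = 0`. -/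
lemma zero_of_lt_one_int {μ : Measure ℝ} {w : ℝ → ℝ≥0∞} (hw : Measurable w)
    {s : Set ℝ} (hs : MeasurableSet s) (hfin : μ s ≠ ⊤)
    (hlt : ∀ x ∈ s, w x < 1) (hge : μ s ≤ ∫⁻ x in s, w x ∂μ) : μ s = 0 := by
  set t : ℕ → Set ℝ := fun n => {x ∈ s | w x + (↑(n+1))⁻¹ ≤ 1} with ht
  have htm : ∀ n, MeasurableSet (t n) := by
    intro n
    have : t n = s ∩ (fun x => w x + (↑(n+1))⁻¹) ⁻¹' (Iic 1) := rfl
    rw [this]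
    exact hs.inter ((hw.add measurable_const) measurableSet_Iic)
  have hmono : Monotone t := by
    intro n m hnm x hx
    refine ⟨hx.1, le_trans (add_le_add_right ?_ _) hx.2⟩
    exact ENNReal.inv_le_inv.mpr (by exact_mod_cast Nat.succ_le_succ hnm)
  have hcover : s = ⋃ n, t n := by
    ext x
    constructor
    · intro hx
      have h1 : (1 : ℝ≥0∞) - w x ≠ 0 := by
        have := hlt x hx
        simp only [ne_eq, tsub_eq_zero_iff_le, not_le]
        exact this
      obtain ⟨n, hn⟩ := ENNReal.exists_inv_nat_lt h1
      refine mem_iUnion.2 ⟨n, hx, ?_⟩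
      have h2 : ((↑(n+1)) : ℝ≥0∞)⁻¹ ≤ (↑n)⁻¹ := by
        apply ENNReal.inv_le_inv.mpr; exact_mod_cast Nat.le_succ n
      have h3 : ((↑(n+1)) : ℝ≥0∞)⁻¹ ≤ 1 - w x := le_trans h2 hn.le
      calc w x + (↑(n+1) : ℝ≥0∞)⁻¹ ≤ w x + (1 - w x) := add_le_add_right h3 _
        _ = 1 := add_tsub_cancel_of_le (hlt x hx).le
    · intro hx
      obtain ⟨n, hn⟩ := mem_iUnion.1 hx
      exact hn.1
  have hzero : ∀ n, μ (t n) = 0 := by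
    intro n
    set ε : ℝ≥0∞ := (↑(n+1))⁻¹ with hε
    have hsub : t n ⊆ s := fun x hx => hx.1
    have hsplit : μ s = μ (t n) + μ (s \ t n) := by
      rw [← measure_inter_add_diff s (htm n), inter_eq_self_of_subset_right hsub]
    have hint : ∫⁻ x in s, w x ∂μ = (∫⁻ x in t n, w x ∂μ) + ∫⁻ x in s \ t n, w x ∂μ := by
      rw [← union_diff_cancel hsub,
        lintegral_union (hs.diff (htm n)) disjoint_sdiff_right, union_diff_cancel hsub]
    have hb1 : (∫⁻ x in t n, w x ∂μ) + ε * μ (t n) ≤ μ (t n) := by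
      have : ∫⁻ x in t n, (w x + ε) ∂μ ≤ ∫⁻ x in t n, 1 ∂μ := by
        exact setLIntegral_mono measurable_const (fun x hx => hx.2)
      rw [lintegral_add_right _ measurable_const, setLIntegral_one,
        lintegral_const, Measure.restrict_apply_univ] at this
      simpa [mul_comm] using this
    have hb2 : ∫⁻ x in s \ t n, w x ∂μ ≤ μ (s \ t n) := by
      calc ∫⁻ x in s \ t n, w x ∂μ ≤ ∫⁻ _ in s \ t n, 1 ∂μ :=
            setLIntegral_mono measurable_const (fun x hx => (hlt x hx.1).le)
        _ = μ (s \ t n) := by rw [setLIntegral_one]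
    have key : μ s + ε * μ (t n) ≤ μ s := by
      calc μ s + ε * μ (t n) ≤ (∫⁻ x in s, w x ∂μ) + ε * μ (t n) := add_le_add_left hge _
        _ = ((∫⁻ x in t n, w x ∂μ) + ε * μ (t n)) + ∫⁻ x in s \ t n, w x ∂μ := by
            rw [hint]; ring
        _ ≤ μ (t n) + μ (s \ t n) := add_le_add hb1 hb2
        _ = μ s := hsplit.symm
    by_contra hne
    have hεne : ε * μ (t n) ≠ 0 := by
      simp only [ne_eq, mul_eq_zero, not_or]
      exact ⟨by rw [hε]; simp, hne⟩
    exact absurd key (not_le.mpr (ENNReal.lt_add_right hfin hεne))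
  have heq : μ s = ⨆ n, μ (t n) := by
    rw [hcover]
    exact (hmono.directed_le).measure_iUnion
  rw [heq]
  simp only [hzero]
  exact iSup_const

/-- If `1 < w` on `s` and `∫_s w ≤ μ s < ∞`, then `μ s = 0`. -/
lemma zero_of_one_lt_int {μ : Measure ℝ} {w : ℝ → ℝ≥0∞} (hw : Measurable w)
    {s : Set ℝ} (hs : MeasurableSet s) (hfin : μ s ≠ ⊤)
    (hgt : ∀ x ∈ s, 1 < w x) (hle : (∫⁻ x in s, w x ∂μ) ≤ μ s) : μ s = 0 := by
  set t : ℕ → Set ℝ := fun n => {x ∈ s | 1 + (↑(n+1))⁻¹ ≤ w x} with ht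
  have htm : ∀ n, MeasurableSet (t n) := by
    intro n
    have : t n = s ∩ w ⁻¹' (Ici (1 + (↑(n+1))⁻¹)) := rfl
    rw [this]
    exact hs.inter (hw measurableSet_Ici)
  have hmono : Monotone t := by
    intro n m hnm x hx
    refine ⟨hx.1, le_trans (add_le_add_right ?_ _) hx.2⟩
    exact ENNReal.inv_le_inv.mpr (by exact_mod_cast Nat.succ_le_succ hnm)
  have hcover : s = ⋃ n, t n := by
    ext x
    constructor
    · intro hx
      have h1 : w x - 1 ≠ 0 := by
        simp only [ne_eq, tsub_eq_zero_iff_le, not_le]; exact hgt x hx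
      obtain ⟨n, hn⟩ := ENNReal.exists_inv_nat_lt h1
      refine mem_iUnion.2 ⟨n, hx, ?_⟩
      have h2 : ((↑(n+1)) : ℝ≥0∞)⁻¹ ≤ (↑n)⁻¹ := by
        apply ENNReal.inv_le_inv.mpr; exact_mod_cast Nat.le_succ n
      calc (1 : ℝ≥0∞) + (↑(n+1))⁻¹ ≤ 1 + (w x - 1) := add_le_add_right (le_trans h2 hn.le) _
        _ = w x := add_tsub_cancel_of_le (hgt x hx).le
    · intro hx
      obtain ⟨n, hn⟩ := mem_iUnion.1 hx
      exact hn.1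
  have hzero : ∀ n, μ (t n) = 0 := by
    intro n
    set ε : ℝ≥0∞ := (↑(n+1))⁻¹ with hε
    have hsub : t n ⊆ s := fun x hx => hx.1
    have hsplit : μ s = μ (t n) + μ (s \ t n) := by
      rw [← measure_inter_add_diff s (htm n), inter_eq_self_of_subset_right hsub]
    have hint : ∫⁻ x in s, w x ∂μ = (∫⁻ x in t n, w x ∂μ) + ∫⁻ x in s \ t n, w x ∂μ := by
      rw [← union_diff_cancel hsub,
        lintegral_union (hs.diff (htm n)) disjoint_sdiff_right, union_diff_cancel hsub]
    have hb1 : μ (t n) + ε * μ (t n) ≤ ∫⁻ x in t n, w x ∂μ := by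
      have : ∫⁻ x in t n, (1 + ε) ∂μ ≤ ∫⁻ x in t n, w x ∂μ :=
        setLIntegral_mono hw (fun x hx => hx.2)
      rw [lintegral_const, Measure.restrict_apply_univ, add_mul, one_mul] at this
      simpa [mul_comm] using this
    have hb2 : μ (s \ t n) ≤ ∫⁻ x in s \ t n, w x ∂μ := by
      calc μ (s \ t n) = ∫⁻ _ in s \ t n, 1 ∂μ := by rw [setLIntegral_one]
        _ ≤ ∫⁻ x in s \ t n, w x ∂μ :=
            setLIntegral_mono hw (fun x hx => (hgt x hx.1).le)
    have key : μ s + ε * μ (t n) ≤ μ s := by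
      calc μ s + ε * μ (t n) = (μ (t n) + ε * μ (t n)) + μ (s \ t n) := by rw [hsplit]; ring
        _ ≤ (∫⁻ x in t n, w x ∂μ) + ∫⁻ x in s \ t n, w x ∂μ := add_le_add hb1 hb2
        _ = ∫⁻ x in s, w x ∂μ := hint.symm
        _ ≤ μ s := hle
    by_contra hne
    have hεne : ε * μ (t n) ≠ 0 := by
      simp only [ne_eq, mul_eq_zero, not_or]
      exact ⟨by rw [hε]; simp, hne⟩
    exact absurd key (not_le.mpr (ENNReal.lt_add_right hfin hεne))
  have heq : μ s = ⨆ n, μ (t n) := by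
    rw [hcover]
    exact (hmono.directed_le).measure_iUnion
  rw [heq]
  simp only [hzero]
  exact iSup_const

/-- An invariant probability measure absolutely continuous w.r.t. an ergodic probability
measure coincides with it. -/
lemma ew_lemma {F : ℝ → ℝ} (hF : Measurable F) {μ ν : Measure ℝ}
    [IsProbabilityMeasure μ] [IsProbabilityMeasure ν]
    (hμ : Ergodic F μ) (hν : ν.map F = ν) (hac : ν ≪ μ) : ν = μ := by
  set w : ℝ → ℝ≥0∞ := ν.rnDeriv μ with hwdef
  have hw : Measurable w := Measure.measurable_rnDeriv ν μ
  have hνd : μ.withDensity w = ν := Measure.withDensity_rnDeriv_eq ν μ hac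
  have hνint : ∀ s : Set ℝ, MeasurableSet s → ν s = ∫⁻ x in s, w x ∂μ := by
    intro s hs; rw [← hνd, withDensity_apply _ hs]
  set A : Set ℝ := {x | w x < 1} with hA
  have hAm : MeasurableSet A := hw measurableSet_Iio
  have hμmap : ∀ s : Set ℝ, MeasurableSet s → μ (F ⁻¹' s) = μ s :=
    fun s hs => hμ.toMeasurePreserving.measure_preimage hs.nullMeasurableSet
  have hνmap : ∀ s : Set ℝ, MeasurableSet s → ν (F ⁻¹' s) = ν s := by
    intro s hs
    conv_rhs => rw [← hν]
    rw [Measure.map_apply hF hs]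
  -- the two "halves" of the symmetric difference
  set D₁ : Set ℝ := A \ F ⁻¹' A with hD₁
  set D₂ : Set ℝ := F ⁻¹' A \ A with hD₂
  have hD₁m : MeasurableSet D₁ := hAm.diff (hF hAm)
  have hD₂m : MeasurableSet D₂ := (hF hAm).diff hAm
  have hcancel : ∀ (ρ : Measure ℝ) , IsFiniteMeasure ρ → ρ (F ⁻¹' A) = ρ A → ρ D₁ = ρ D₂ := by
    intro ρ hρ h
    have h1 : ρ (A ∩ F ⁻¹' A) + ρ D₁ = ρ A := measure_inter_add_diff A (hF hAm)
    have h2 : ρ (F ⁻¹' A ∩ A) + ρ D₂ = ρ (F ⁻¹' A) := measure_inter_add_diff _ hAm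
    rw [inter_comm] at h2
    rw [h, ← h1] at h2
    exact (ENNReal.add_right_inj (measure_ne_top ρ _)).mp h2.symm
  have hμD : μ D₁ = μ D₂ := hcancel μ inferInstance (hμmap A hAm)
  have hνD : ν D₁ = ν D₂ := hcancel ν inferInstance (hνmap A hAm)
  have hb : μ D₂ ≤ ν D₂ := by
    rw [hνint D₂ hD₂m]
    calc μ D₂ = ∫⁻ _ in D₂, 1 ∂μ := by rw [setLIntegral_one]
      _ ≤ ∫⁻ x in D₂, w x ∂μ :=
        setLIntegral_mono hw (fun x hx => not_lt.mp hx.2)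
  have hμD₁ : μ D₁ = 0 := by
    refine zero_of_lt_one_int hw hD₁m (measure_ne_top μ _) (fun x hx => hx.1) ?_
    calc μ D₁ = μ D₂ := hμD
      _ ≤ ν D₂ := hb
      _ = ν D₁ := hνD.symm
      _ = ∫⁻ x in D₁, w x ∂μ := hνint D₁ hD₁m
  have hμD₂ : μ D₂ = 0 := by rw [← hμD, hμD₁]
  have hinv : F ⁻¹' A =ᵐ[μ] A := ae_eq_set.mpr ⟨hμD₂, hμD₁⟩
  rcases hμ.quasiErgodic.ae_empty_or_univ₀ hAm.nullMeasurableSet hinv with hcase | hcase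
  · -- μ A = 0 : w ≥ 1 a.e., conclude w = 1 a.e.
    have hA0 : μ A = 0 := by
      rw [measure_congr hcase]; simp
    have hge : ∀ᵐ x ∂μ, 1 ≤ w x := by
      have := measure_eq_zero_iff_ae_notMem.mp hA0
      filter_upwards [this] with x hx
      simpa [hA, not_lt] using hx
    set S : Set ℝ := {x | 1 < w x} with hS
    have hSm : MeasurableSet S := measurableSet_lt measurable_const hw
    have hcompl : ∫⁻ x in Sᶜ, w x ∂μ = μ Sᶜ := by
      have : ∫⁻ x in Sᶜ, w x ∂μ = ∫⁻ _ in Sᶜ, 1 ∂μ := by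
        refine setLIntegral_congr_fun_ae hSm.compl ?_
        filter_upwards [hge] with x h1 hx
        exact le_antisymm (not_lt.mp hx) h1
      rw [this, setLIntegral_one]
    have htot : (∫⁻ x in S, w x ∂μ) + μ Sᶜ = μ S + μ Sᶜ := by
      have h1 : (∫⁻ x in S, w x ∂μ) + ∫⁻ x in Sᶜ, w x ∂μ = ∫⁻ x, w x ∂μ :=
        lintegral_add_compl _ hSm
      have h2 : ∫⁻ x, w x ∂μ = ν univ := by
        rw [hνint univ MeasurableSet.univ, Measure.restrict_univ]
      have h3 : μ S + μ Sᶜ = μ univ := measure_add_measure_compl hSm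
      rw [hcompl] at h1
      rw [h1, h2, h3]
      simp [measure_univ]
    have hint_eq : ∫⁻ x in S, w x ∂μ = μ S :=
      (ENNReal.add_left_inj (measure_ne_top μ _)).mp htot
    have hS0 : μ S = 0 :=
      zero_of_one_lt_int hw hSm (measure_ne_top μ _) (fun x hx => hx) hint_eq.le
    have hle : ∀ᵐ x ∂μ, w x ≤ 1 := by
      have := measure_eq_zero_iff_ae_notMem.mp hS0
      filter_upwards [this] with x hx
      simpa [hS, not_lt] using hx
    have hone : w =ᵐ[μ] 1 := by
      filter_upwards [hge, hle] with x h1 h2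
      exact le_antisymm h2 h1
    rw [← hνd, withDensity_congr_ae hone, withDensity_one]
  · -- μ A = 1 : w < 1 a.e., contradiction
    exfalso
    have hA1 : μ A = 1 := by
      rw [measure_congr hcase]; simp
    have hAc0 : μ Aᶜ = 0 := by
      rw [prob_compl_eq_one_sub hAm, hA1, tsub_self]
    have hνAc : ν Aᶜ = 0 := by
      rw [hνint Aᶜ hAm.compl, setLIntegral_measure_zero _ _ hAc0]
    have hνA : ν A = 1 := by
      have := measure_add_measure_compl hAm (μ := ν)
      rw [hνAc, add_zero, measure_univ] at this
      exact this
    have h0 : μ A = 0 := by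
      refine zero_of_lt_one_int hw hAm (measure_ne_top μ _) (fun x hx => hx) ?_
      rw [← hνint A hAm, hνA, hA1]
    rw [hA1] at h0
    exact one_ne_zero h0

/-- `mI` unfolds to `InvariantOn` etc.: the extended map. -/
lemma map_ext_eq {a b : ℝ} {f : ℝ → ℝ} (hmaps : MapsTo f (Icc a b) (Icc a b))
    {ρ : Measure ℝ} (hconc : ρ (Icc a b)ᶜ = 0) (hinv : InvariantOn f a b ρ) :
    ∀ A : Set ℝ, MeasurableSet A → ρ ((Icc a b).piecewise f id ⁻¹' A) = ρ A := by
  intro A hA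
  set I := Icc a b with hI
  set F := I.piecewise f id with hFdef
  have hpre : F ⁻¹' A ∩ I = f ⁻¹' (A ∩ I) ∩ I := by
    ext x
    simp only [mem_inter_iff, mem_preimage, hFdef]
    constructor
    · rintro ⟨hFx, hxI⟩
      rw [Set.piecewise_eq_of_mem _ _ _ hxI] at hFx
      exact ⟨⟨hFx, hmaps hxI⟩, hxI⟩
    · rintro ⟨⟨hfx, _⟩, hxI⟩
      rw [Set.piecewise_eq_of_mem _ _ _ hxI]
      exact ⟨hfx, hxI⟩
  have h1 : ρ (F ⁻¹' A) = ρ (F ⁻¹' A ∩ I) := by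
    have := measure_inter_add_diff (μ := ρ) (t := I) (F ⁻¹' A) measurableSet_Icc
    have hd : ρ (F ⁻¹' A \ I) = 0 :=
      measure_mono_null (diff_subset_compl _ _) hconc
    rw [← this, hd, add_zero]
  have h2 : ρ A = ρ (A ∩ I) := by
    have := measure_inter_add_diff (μ := ρ) (t := I) A measurableSet_Icc
    have hd : ρ (A \ I) = 0 := measure_mono_null (diff_subset_compl _ _) hconc
    rw [← this, hd, add_zero]
  rw [h1, hpre, h2]
  exact hinv (A ∩ I) inter_subset_right (hA.inter measurableSet_Icc)

lemma ergodic_ext {a b : ℝ} {f : ℝ → ℝ} (hmeas : Measurable f)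
    (hmaps : MapsTo f (Icc a b) (Icc a b))
    {ρ : Measure ℝ} [IsProbabilityMeasure ρ] (hconc : ρ (Icc a b)ᶜ = 0)
    (hinv : InvariantOn f a b ρ) (herg : ErgodicInv f a b ρ) :
    Ergodic ((Icc a b).piecewise f id) ρ := by
  set I := Icc a b with hI
  set F := I.piecewise f id with hFdef
  have hF : Measurable F := Measurable.piecewise measurableSet_Icc hmeas measurable_id
  have hmap : ρ.map F = ρ :=
    Measure.ext fun A hA => by
      rw [Measure.map_apply hF hA]; exact map_ext_eq hmaps hconc hinv A hA
  refine ⟨⟨hF, hmap⟩, ⟨fun s hs hfs => ?_⟩⟩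
  rw [Filter.eventuallyConst_set']
  have hconc' : ∀ B : Set ℝ, MeasurableSet B → ρ B = ρ (B ∩ I) := by
    intro B hB
    have := measure_inter_add_diff (μ := ρ) (t := I) B measurableSet_Icc
    have hd : ρ (B \ I) = 0 := measure_mono_null (diff_subset_compl _ _) hconc
    rw [← this, hd, add_zero]
  have hpre : F ⁻¹' s ∩ I = f ⁻¹' (s ∩ I) ∩ I := by
    ext x
    simp only [mem_inter_iff, mem_preimage, hFdef]
    constructor
    · rintro ⟨hFx, hxI⟩
      rw [Set.piecewise_eq_of_mem _ _ _ hxI] at hFx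
      exact ⟨⟨hFx, hmaps hxI⟩, hxI⟩
    · rintro ⟨⟨hfx, _⟩, hxI⟩
      rw [Set.piecewise_eq_of_mem _ _ _ hxI]
      exact ⟨hfx, hxI⟩
  have hkey : f ⁻¹' (s ∩ I) ∩ I = s ∩ I := by rw [← hpre, hfs]
  rcases herg (s ∩ I) inter_subset_right (hs.inter measurableSet_Icc) hkey with h0 | h1
  · left
    exact ae_eq_empty.mpr (by rw [hconc' s hs]; exact h0)
  · right
    rw [ae_eq_univ]
    have hs1 : ρ s = 1 := by rw [hconc' s hs]; exact h1
    rw [prob_compl_eq_one_sub hs, hs1, tsub_self]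

/-- two ergodic invariant acips coincide provided one of them is equivalent
to Lebesgue on `Δ*` and almost every point has a neighbourhood entering `Δ*` under some
iterate. -/
theorem stmt2 (a b : ℝ) (hab : a < b)
    (f : ℝ → ℝ) (hmeas : Measurable f) (hmaps : MapsTo f (Icc a b) (Icc a b))
    (Δstar : Set ℝ) (hΔmeas : MeasurableSet Δstar) (hΔsub : Δstar ⊆ Icc a b)
    (μ ν : Measure ℝ)
    (hμprob : IsProbabilityMeasure μ) (hμconc : μ (Icc a b)ᶜ = 0)
    (hμinv : InvariantOn f a b μ) (hμerg : ErgodicInv f a b μ) (hμabs : μ ≪ mI a b)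
    (hνprob : IsProbabilityMeasure ν) (hνconc : ν (Icc a b)ᶜ = 0)
    (hνinv : InvariantOn f a b ν) (hνerg : ErgodicInv f a b ν) (hνabs : ν ≪ mI a b)
    (hequiv : ∀ A : Set ℝ, A ⊆ Δstar → MeasurableSet A → (μ A = 0 ↔ mI a b A = 0))
    (hret : ∀ᵐ x ∂(mI a b), ∃ V : Set ℝ, IsOpen V ∧ x ∈ V ∧
      ∃ N : ℕ, f^[N] '' (V ∩ Icc a b) ⊆ Δstar) :
    μ = ν := by
  haveI := hμprob
  haveI := hνprob
  haveI : IsFiniteMeasure (mI a b) := by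
    constructor
    rw [mI, Measure.restrict_apply_univ, Real.volume_Icc]
    exact ENNReal.ofReal_lt_top
  set I := Icc a b with hI
  have hIm : MeasurableSet I := measurableSet_Icc
  set F := I.piecewise f id with hFdef
  have hF : Measurable F := Measurable.piecewise measurableSet_Icc hmeas measurable_id
  have hμE : Ergodic F μ := ergodic_ext hmeas hmaps hμconc hμinv hμerg
  have hνE : Ergodic F ν := ergodic_ext hmeas hmaps hνconc hνinv hνerg
  have hμmap : ∀ A : Set ℝ, MeasurableSet A → μ (F ⁻¹' A) = μ A :=
    map_ext_eq hmaps hμconc hμinv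
  have hνmap : ∀ A : Set ℝ, MeasurableSet A → ν (F ⁻¹' A) = ν A :=
    map_ext_eq hmaps hνconc hνinv
  -- step 1 : ν Δstar ≠ 0
  have hνΔ : ν Δstar ≠ 0 := by
    set GN : ℕ → Set ℝ := fun N => f^[N] ⁻¹' Δstar ∩ I with hGN
    have hGNm : ∀ N, MeasurableSet (GN N) :=
      fun N => ((hmeas.iterate N) hΔmeas).inter hIm
    have hGNν : ∀ N, ν (GN N) = ν Δstar := by
      intro N
      induction N with
      | zero =>
        have : GN 0 = Δstar := by
          rw [hGN]; simp only [iterate_zero, preimage_id']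
          exact inter_eq_self_of_subset_left hΔsub
        rw [this]
      | succ N ih =>
        have hset : GN (N + 1) = f ⁻¹' (GN N) ∩ I := by
          ext x
          simp only [hGN, mem_inter_iff, mem_preimage, iterate_succ_apply]
          constructor
          · rintro ⟨h1, h2⟩; exact ⟨⟨h1, hmaps h2⟩, h2⟩
          · rintro ⟨⟨h1, _⟩, h2⟩; exact ⟨h1, h2⟩
        rw [hset, hνinv (GN N) inter_subset_right (hGNm N), ih]
    have hae : ∀ᵐ x ∂(mI a b), x ∈ ⋃ N, GN N := by
      have hmem : ∀ᵐ x ∂(mI a b), x ∈ I := ae_restrict_mem hIm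
      filter_upwards [hret, hmem] with x hx hxI
      obtain ⟨V, -, hxV, N, himg⟩ := hx
      exact mem_iUnion.2 ⟨N, himg ⟨x, ⟨hxV, hxI⟩, rfl⟩, hxI⟩
    intro hν0
    have hU0 : ν (⋃ N, GN N) = 0 := by
      apply measure_iUnion_null
      intro N; rw [hGNν N, hν0]
    have hUc0 : ν {x | x ∉ ⋃ N, GN N} = 0 := hνabs (ae_iff.mp hae)
    have : (1 : ℝ≥0∞) ≤ 0 := by
      calc (1 : ℝ≥0∞) = ν univ := measure_univ.symm
        _ ≤ ν (⋃ N, GN N) + ν {x | x ∉ ⋃ N, GN N} := by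
            refine le_trans (measure_mono ?_) (measure_union_le _ _)
            intro x _
            by_cases h : x ∈ ⋃ N, GN N
            · exact Or.inl h
            · exact Or.inr h
        _ = 0 := by rw [hU0, hUc0, add_zero]
    simp at this
  -- densities
  set g : ℝ → ℝ≥0∞ := μ.rnDeriv (mI a b) with hgdef
  set h : ℝ → ℝ≥0∞ := ν.rnDeriv (mI a b) with hhdef
  have hg : Measurable g := Measure.measurable_rnDeriv _ _
  have hh : Measurable h := Measure.measurable_rnDeriv _ _
  have hμd : (mI a b).withDensity g = μ := Measure.withDensity_rnDeriv_eq μ _ hμabs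
  have hνd : (mI a b).withDensity h = ν := Measure.withDensity_rnDeriv_eq ν _ hνabs
  set d : ℝ → ℝ≥0∞ := fun x => min (g x) (h x) with hddef
  have hd : Measurable d := hg.min hh
  set κ : Measure ℝ := (mI a b).withDensity d with hκdef
  have hg0 : MeasurableSet {x : ℝ | g x = 0} := hg (measurableSet_singleton 0)
  have hh0 : MeasurableSet {x : ℝ | h x = 0} := hh (measurableSet_singleton 0)
  have hd0 : MeasurableSet {x : ℝ | d x = 0} := hd (measurableSet_singleton 0)
  have hκμ : ∀ s : Set ℝ, MeasurableSet s → κ s ≤ μ s := by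
    intro s hs
    rw [hκdef, withDensity_apply _ hs, ← hμd, withDensity_apply _ hs]
    exact setLIntegral_mono hg (fun x _ => min_le_left _ _)
  have hκν : ∀ s : Set ℝ, MeasurableSet s → κ s ≤ ν s := by
    intro s hs
    rw [hκdef, withDensity_apply _ hs, ← hνd, withDensity_apply _ hs]
    exact setLIntegral_mono hh (fun x _ => min_le_right _ _)
  -- κ is not zero
  have hgΔ : mI a b (Δstar ∩ {x | g x = 0}) = 0 := by
    apply (hequiv _ inter_subset_left (hΔmeas.inter hg0)).mp
    rw [← hμd, withDensity_apply _ (hΔmeas.inter hg0)]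
    rw [setLIntegral_congr_fun (hΔmeas.inter hg0)
      (fun x hx => hx.2)]
    simp
  have hhΔ : mI a b (Δstar ∩ {x | h x ≠ 0}) ≠ 0 := by
    intro h0
    apply hνΔ
    have hm : MeasurableSet (Δstar ∩ {x | h x ≠ 0}) :=
      hΔmeas.inter hh0.compl
    have h1 : ν (Δstar ∩ {x | h x ≠ 0}) = 0 := hνabs h0
    have h2 : ν (Δstar ∩ {x | h x = 0}) = 0 := by
      rw [← hνd, withDensity_apply _ (hΔmeas.inter hh0)]
      rw [setLIntegral_congr_fun (hΔmeas.inter hh0)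
        (fun x hx => hx.2)]
      simp
    refine le_antisymm ?_ zero_le
    calc ν Δstar ≤ ν (Δstar ∩ {x | h x ≠ 0}) + ν (Δstar ∩ {x | h x = 0}) := by
          refine le_trans (measure_mono ?_) (measure_union_le _ _)
          intro x hx
          by_cases hc : h x = 0
          · exact Or.inr ⟨hx, hc⟩
          · exact Or.inl ⟨hx, hc⟩
      _ = 0 := by rw [h1, h2, add_zero]
  set T : Set ℝ := Δstar ∩ {x | h x ≠ 0} ∩ {x | g x ≠ 0} with hT
  have hTm : MeasurableSet T :=
    (hΔmeas.inter hh0.compl).inter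
      hg0.compl
  have hTpos : mI a b T ≠ 0 := by
    intro h0
    apply hhΔ
    refine le_antisymm ?_ zero_le
    calc mI a b (Δstar ∩ {x | h x ≠ 0}) ≤ mI a b T + mI a b (Δstar ∩ {x | g x = 0}) := by
          refine le_trans (measure_mono ?_) (measure_union_le _ _)
          rintro x ⟨hx1, hx2⟩
          by_cases hc : g x = 0
          · exact Or.inr ⟨hx1, hc⟩
          · exact Or.inl ⟨⟨hx1, hx2⟩, hc⟩
      _ = 0 := by rw [h0, hgΔ, add_zero]
  have hκT : κ T ≠ 0 := by
    intro h0
    apply hTpos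
    rw [hκdef, withDensity_apply _ hTm] at h0
    have hae0 : d =ᵐ[(mI a b).restrict T] 0 := (lintegral_eq_zero_iff hd).mp h0
    have h1 : ((mI a b).restrict T) {x | d x ≠ 0} = 0 := by
      have := ae_iff.mp hae0
      simpa using this
    have hdne : MeasurableSet {x : ℝ | d x ≠ 0} := hd0.compl
    have h2 : mI a b ({x | d x ≠ 0} ∩ T) = 0 := by
      rw [← Measure.restrict_apply hdne]
      exact h1
    have h3 : T ⊆ {x | d x ≠ 0} ∩ T := by
      intro x hx
      refine ⟨?_, hx⟩
      have hgx : g x ≠ 0 := hx.2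
      have hhx : h x ≠ 0 := hx.1.2
      simp only [mem_setOf_eq, hddef, ne_eq, min_eq_iff]
      rintro (⟨h1', -⟩ | ⟨h1', -⟩) <;> [exact hgx h1'; exact hhx h1']
    exact measure_mono_null h3 h2
  -- κ is invariant
  set P : Set ℝ := {x | g x ≤ h x} with hPdef
  have hPm : MeasurableSet P := by
    have : P = (fun x => g x - h x) ⁻¹' {0} := by
      ext x
      simp only [hPdef, mem_setOf_eq, mem_preimage, mem_singleton_iff, tsub_eq_zero_iff_le]
    rw [this]
    exact (hg.sub hh) (measurableSet_singleton 0)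
  have hκP : ∀ A : Set ℝ, MeasurableSet A → κ (A ∩ P) = μ (A ∩ P) := by
    intro A hA
    rw [hκdef, withDensity_apply _ (hA.inter hPm), ← hμd, withDensity_apply _ (hA.inter hPm)]
    refine setLIntegral_congr_fun (hA.inter hPm) ?_
    intro x hx
    exact min_eq_left hx.2
  have hκQ : ∀ A : Set ℝ, MeasurableSet A → κ (A \ P) = ν (A \ P) := by
    intro A hA
    rw [hκdef, withDensity_apply _ (hA.diff hPm), ← hνd, withDensity_apply _ (hA.diff hPm)]
    refine setLIntegral_congr_fun (hA.diff hPm) ?_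
    intro x hx
    exact min_eq_right (le_of_not_ge hx.2)
  have hκle : ∀ A : Set ℝ, MeasurableSet A → κ (F ⁻¹' A) ≤ κ A := by
    intro A hA
    have hsplit : F ⁻¹' A = F ⁻¹' (A ∩ P) ∪ F ⁻¹' (A \ P) := by
      rw [← preimage_union, inter_union_diff]
    have hdisj : Disjoint (F ⁻¹' (A ∩ P)) (F ⁻¹' (A \ P)) :=
      (disjoint_sdiff_right.mono_left inter_subset_right).preimage F
    calc κ (F ⁻¹' A) = κ (F ⁻¹' (A ∩ P)) + κ (F ⁻¹' (A \ P)) := by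
          rw [hsplit]
          exact measure_union hdisj (hF (hA.diff hPm))
      _ ≤ μ (F ⁻¹' (A ∩ P)) + ν (F ⁻¹' (A \ P)) :=
          add_le_add (hκμ _ (hF (hA.inter hPm))) (hκν _ (hF (hA.diff hPm)))
      _ = μ (A ∩ P) + ν (A \ P) := by
          rw [hμmap _ (hA.inter hPm), hνmap _ (hA.diff hPm)]
      _ = κ (A ∩ P) + κ (A \ P) := by rw [hκP A hA, hκQ A hA]
      _ = κ A := measure_inter_add_diff A hPm
  haveI hκfin : IsFiniteMeasure κ := by
    constructor
    calc κ univ ≤ μ univ := hκμ univ MeasurableSet.univ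
      _ = 1 := measure_univ
      _ < ⊤ := ENNReal.one_lt_top
  have hκmap : ∀ A : Set ℝ, MeasurableSet A → κ (F ⁻¹' A) = κ A := by
    intro A hA
    refine le_antisymm (hκle A hA) ?_
    have h1 : κ (F ⁻¹' A) + κ (F ⁻¹' Aᶜ) = κ A + κ Aᶜ := by
      have e1 : κ (F ⁻¹' A) + κ (F ⁻¹' Aᶜ) = κ univ := by
        rw [preimage_compl]
        exact measure_add_measure_compl (hF hA)
      have e2 : κ A + κ Aᶜ = κ univ := measure_add_measure_compl hA
      rw [e1, e2]
    have h2 : κ A + κ Aᶜ ≤ κ (F ⁻¹' A) + κ Aᶜ := by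
      calc κ A + κ Aᶜ = κ (F ⁻¹' A) + κ (F ⁻¹' Aᶜ) := h1.symm
        _ ≤ κ (F ⁻¹' A) + κ Aᶜ := add_le_add_right (hκle Aᶜ hA.compl) _
    exact (ENNReal.add_le_add_iff_right (measure_ne_top κ Aᶜ)).mp h2
  -- normalize κ and apply the uniqueness lemma twice
  set c : ℝ≥0∞ := κ univ with hc
  have hc0 : c ≠ 0 := by
    intro h0
    exact hκT (le_antisymm (h0 ▸ measure_mono (subset_univ T)) zero_le)
  have hcfin : c ≠ ⊤ := measure_ne_top κ univ
  set κ' : Measure ℝ := c⁻¹ • κ with hκ'def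
  haveI hκ'prob : IsProbabilityMeasure κ' := by
    constructor
    rw [hκ'def, Measure.smul_apply, smul_eq_mul, ← hc, ENNReal.inv_mul_cancel hc0 hcfin]
  have hκ'map : κ'.map F = κ' := by
    rw [hκ'def, Measure.map_smul]
    congr 1
    exact Measure.ext fun A hA => by rw [Measure.map_apply hF hA]; exact hκmap A hA
  have hκ'μ : κ' ≪ μ := by
    refine Measure.AbsolutelyContinuous.mk ?_
    intro s hs h0
    have : κ s = 0 := le_antisymm (le_trans (hκμ s hs) h0.le) zero_le
    rw [hκ'def, Measure.smul_apply, this, smul_eq_mul, mul_zero]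
  have hκ'ν : κ' ≪ ν := by
    refine Measure.AbsolutelyContinuous.mk ?_
    intro s hs h0
    have : κ s = 0 := le_antisymm (le_trans (hκν s hs) h0.le) zero_le
    rw [hκ'def, Measure.smul_apply, this, smul_eq_mul, mul_zero]
  have hμ' : κ' = μ := ew_lemma hF hμE hκ'map hκ'μ
  have hν' : κ' = ν := ew_lemma hF hνE hκ'map hκ'ν
  rw [← hμ', hν']
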